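/- For every natural number n, the (n+1)-ary generalized S combinator satisfies the recurrence S_{n+1} =βη (B S_n (S_n (K_n S))). Moreover S_0 =βη I. -/
import Mathlib


namespace LC

/-- Untyped λ-terms, de Bruijn indices. -/
inductive Tm : Type
  | var : ℕ → Tm
  | app : Tm → Tm → Tm
  | lam : Tm → Tm
  deriving DecidableEq

namespace Tm

/-- Shift the free variables ≥ c up by one. -/
def lift (c : ℕ) : Tm → Tm
  | var n => if n < c then var n else var (n + 1)
  | app a b => app (lift c a) (lift c b)
  | lam a => lam (lift (c + 1) a)

/-- Substitute `s` for the free variable `k`. -/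
def subst (k : ℕ) (s : Tm) : Tm → Tm
  | var n => if n = k then s else if k < n then var (n - 1) else var n
  | app a b => app (subst k s a) (subst k s b)
  | lam a => lam (subst (k + 1) (lift 0 s) a)

/-- One-step βη-reduction (with congruence closure). -/
inductive Step : Tm → Tm → Prop
  | beta (a b : Tm) : Step (app (lam a) b) (subst 0 b a)
  | eta (a : Tm) : Step (lam (app (lift 0 a) (var 0))) a
  | appL {a a' : Tm} (b : Tm) : Step a a' → Step (app a b) (app a' b)
  | appR (a : Tm) {b b' : Tm} : Step b b' → Step (app a b) (app a b')
  | lamCongr {a a' : Tm} : Step a a' → Step (lam a) (lam a')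

/-- βη-equivalence: the equivalence relation generated by βη-reduction. -/
def BetaEta : Tm → Tm → Prop := Relation.EqvGen Step

/-- Multi-step βη-reduction: reflexive-transitive closure of βη-reduction. -/
def Reduces : Tm → Tm → Prop := Relation.ReflTransGen Step

/-- I = λx.x -/
def I : Tm := lam (var 0)
/-- K = λxy.x -/
def K : Tm := lam (lam (var 1))
/-- B = λxyz.(x (y z)) -/
def B : Tm := lam (lam (lam (app (var 2) (app (var 1) (var 0)))))
/-- C = λxyz.(x z y) -/
def C : Tm := lam (lam (lam (app (app (var 2) (var 0)) (var 1))))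
/-- S = λxyz.(x z (y z)) -/
def S : Tm := lam (lam (lam (app (app (var 2) (var 0)) (app (var 1) (var 0)))))

/-- body of the n-th Church numeral: s (s ⋯ (s z)⋯), n times. -/
def churchBody : ℕ → Tm
  | 0 => var 0
  | n + 1 => app (var 1) (churchBody n)

/-- The n-th Church numeral c_n = λsz.(s (s ⋯ (s z)⋯)). -/
def church (n : ℕ) : Tm := lam (lam (churchBody n))

/-- n nested λ-abstractions. -/
def lamN : ℕ → Tm → Tm
  | 0, t => t
  | n + 1, t => lam (lamN n t)

/-- Shift all free variables up by n. -/
def liftN (n : ℕ) (t : Tm) : Tm := (lift 0)^[n] t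

/-- t (var (a+k-1)) ⋯ (var (a+1)) (var a) : left-associated application of t
to k variables with descending indices. -/
def appVars (t : Tm) (a k : ℕ) : Tm :=
  ((List.range k).reverse).foldl (fun s i => app s (var (a + i))) t

/-- t (var a) (var (a+1)) ⋯ (var (a+k-1)) : left-associated application of t
to k variables with ascending indices. -/
def appVarsAsc (t : Tm) (a k : ℕ) : Tm :=
  (List.range k).foldl (fun s i => app s (var (a + i))) t

/-- Left-associated application of t to a list of terms. -/
def appList (t : Tm) (l : List Tm) : Tm := l.foldl app t

/-- K_n = λp x_1…x_n. p -/
def Kn (n : ℕ) : Tm := lamN (n + 1) (var n)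
/-- S_n = λpq x_1…x_n.(p x_1⋯x_n (q x_1⋯x_n)) -/
def Sn (n : ℕ) : Tm :=
  lamN (n + 2) (app (appVars (var (n + 1)) 0 n) (appVars (var n) 0 n))
/-- B_n = λpq x_1…x_n.(p (q x_1⋯x_n)) -/
def Bn (n : ℕ) : Tm := lamN (n + 2) (app (var (n + 1)) (appVars (var n) 0 n))
/-- C_n = λpq x_1…x_n.(p x_1⋯x_n q) -/
def Cn (n : ℕ) : Tm := lamN (n + 2) (app (appVars (var (n + 1)) 0 n) (var n))


-- ===== auxiliary lemmas =====

/-! ### Basic var computations -/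

lemma lift_var_lt {c n : ℕ} (h : n < c) : lift c (var n) = var n := by simp [lift, h]

lemma lift_var_ge {c n : ℕ} (h : c ≤ n) : lift c (var n) = var (n + 1) := by
  simp [lift, Nat.not_lt.2 h]

lemma subst_var_self (k : ℕ) (s : Tm) : subst k s (var k) = s := by simp [subst]

lemma subst_var_gt {k n : ℕ} (s : Tm) (h : k < n) : subst k s (var n) = var (n - 1) := by
  simp [subst, Nat.ne_of_gt h, h]

lemma subst_var_lt {k n : ℕ} (s : Tm) (h : n < k) : subst k s (var n) = var n := by
  simp [subst, Nat.ne_of_lt h, Nat.not_lt.2 h.le]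

/-! ### Closedness -/

/-- All free variables of `t` are `< c`. -/
def ClosedUnder (c : ℕ) : Tm → Prop
  | var n => n < c
  | app a b => ClosedUnder c a ∧ ClosedUnder c b
  | lam a => ClosedUnder (c + 1) a

lemma ClosedUnder.mono {t : Tm} : ∀ {c c' : ℕ}, c ≤ c' → ClosedUnder c t → ClosedUnder c' t := by
  induction t with
  | var n => intro c c' h h'; exact lt_of_lt_of_le h' h
  | app a b iha ihb => intro c c' h h'; exact ⟨iha h h'.1, ihb h h'.2⟩
  | lam a ih => intro c c' h h'; exact ih (Nat.succ_le_succ h) h'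

lemma lift_closed {t : Tm} : ∀ {c c' : ℕ}, ClosedUnder c t → c ≤ c' → lift c' t = t := by
  induction t with
  | var n => intro c c' h hle; exact lift_var_lt (lt_of_lt_of_le h hle)
  | app a b iha ihb =>
      intro c c' h hle
      show app (lift c' a) (lift c' b) = app a b
      rw [iha h.1 hle, ihb h.2 hle]
  | lam a ih =>
      intro c c' h hle
      show lam (lift (c' + 1) a) = lam a
      rw [ih (show ClosedUnder (c + 1) a from h) (Nat.succ_le_succ hle)]

lemma subst_closed {t : Tm} : ∀ {c k : ℕ} (s : Tm), ClosedUnder c t → c ≤ k → subst k s t = t := by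
  induction t with
  | var n => intro c k s h hle; exact subst_var_lt s (lt_of_lt_of_le h hle)
  | app a b iha ihb =>
      intro c k s h hle
      show app (subst k s a) (subst k s b) = app a b
      rw [iha s h.1 hle, ihb s h.2 hle]
  | lam a ih =>
      intro c k s h hle
      show lam (subst (k + 1) (lift 0 s) a) = lam a
      rw [ih _ (show ClosedUnder (c + 1) a from h) (Nat.succ_le_succ hle)]

/-! ### liftN -/

lemma liftN_zero (t : Tm) : liftN 0 t = t := rfl

lemma liftN_succ (k : ℕ) (t : Tm) : liftN (k + 1) t = liftN k (lift 0 t) :=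
  Function.iterate_succ_apply _ _ _

lemma liftN_var (k m : ℕ) : liftN k (var m) = var (m + k) := by
  induction k generalizing m with
  | zero => rfl
  | succ k ih =>
      rw [liftN_succ, lift_var_ge (Nat.zero_le m), ih]
      congr 1; omega

lemma liftN_app (k : ℕ) (a b : Tm) : liftN k (app a b) = app (liftN k a) (liftN k b) := by
  induction k generalizing a b with
  | zero => rfl
  | succ k ih => rw [liftN_succ, liftN_succ, liftN_succ]; exact ih _ _

lemma liftN_closed {t : Tm} (k : ℕ) (h : ClosedUnder 0 t) : liftN k t = t := by
  induction k with
  | zero => rfl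
  | succ k ih => rw [liftN_succ, lift_closed h (Nat.le_refl 0), ih]

/-! ### lamN and appVars structural lemmas -/

lemma lamN_succ (k : ℕ) (t : Tm) : lamN (k + 1) t = lam (lamN k t) := rfl

lemma appVars_zero (t : Tm) (a : ℕ) : appVars t a 0 = t := rfl

/-- Peel the *first* (outermost-index) applied variable. -/
lemma appVars_peel_outer (t : Tm) (a k : ℕ) :
    appVars t a (k + 1) = appVars (app t (var (a + k))) a k := by
  simp [appVars, List.range_succ]

/-- Peel the *last* applied variable. -/
lemma appVars_peel_inner (t : Tm) (a k : ℕ) :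
    appVars t a (k + 1) = app (appVars t (a + 1) k) (var a) := by
  induction k generalizing t a with
  | zero => simp [appVars, List.range_succ]
  | succ k ih =>
      rw [appVars_peel_outer t a (k + 1), ih, appVars_peel_outer t (a + 1) k,
        show a + (k + 1) = a + 1 + k by omega]

lemma closed_lamN {c k : ℕ} {t : Tm} (h : ClosedUnder (c + k) t) : ClosedUnder c (lamN k t) := by
  induction k generalizing c with
  | zero => exact h
  | succ k ih =>
      rw [lamN_succ]
      refine ih ?_
      have e : c + 1 + k = c + (k + 1) := by omega
      rw [e]; exact h

lemma closed_appVars {c : ℕ} {t : Tm} : ∀ {a k : ℕ}, ClosedUnder c t → a + k ≤ c →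
    ClosedUnder c (appVars t a k) := by
  intro a k
  induction k generalizing a with
  | zero => intro ht _; exact ht
  | succ k ih =>
      intro ht h
      rw [appVars_peel_inner]
      exact ⟨ih ht (by omega), show a < c by omega⟩

lemma closed_S : ClosedUnder 0 S := by
  simp [S, ClosedUnder]

lemma closed_B : ClosedUnder 0 B := by
  simp [B, ClosedUnder]

lemma closed_Sn (n : ℕ) : ClosedUnder 0 (Sn n) := by
  refine closed_lamN ?_
  refine ⟨closed_appVars ?_ (by omega), closed_appVars ?_ (by omega)⟩ <;>
    · show _ < _; omega

lemma closed_Kn (n : ℕ) : ClosedUnder 0 (Kn n) := by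
  refine closed_lamN ?_
  show n < 0 + (n + 1); omega

/-! ### subst / lift through appVars and lamN -/

lemma subst_lamN (j : ℕ) (s : Tm) (k : ℕ) (t : Tm) :
    subst j s (lamN k t) = lamN k (subst (j + k) (liftN k s) t) := by
  induction k generalizing j s with
  | zero => rfl
  | succ k ih =>
      rw [lamN_succ, lamN_succ]
      show lam (subst (j + 1) (lift 0 s) (lamN k t)) = _
      rw [ih, ← liftN_succ, show j + 1 + k = j + (k + 1) by omega]

lemma subst_appVars_le {k a m : ℕ} (s : Tm) (t : Tm) (h : a + m ≤ k) :
    subst k s (appVars t a m) = appVars (subst k s t) a m := by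
  revert h
  induction m generalizing t a with
  | zero => intro _; rfl
  | succ m ih =>
      intro h
      rw [appVars_peel_inner, appVars_peel_inner]
      show app (subst k s (appVars t (a + 1) m)) (subst k s (var a)) = _
      rw [ih _ (by omega), subst_var_lt s (by omega)]

lemma subst_appVars_lt {k a m : ℕ} (s : Tm) (t : Tm) (h : k < a) :
    subst k s (appVars t a m) = appVars (subst k s t) (a - 1) m := by
  revert h
  induction m generalizing t a with
  | zero => intro _; rfl
  | succ m ih =>
      intro h
      rw [appVars_peel_inner, appVars_peel_inner]
      show app (subst k s (appVars t (a + 1) m)) (subst k s (var a)) = _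
      rw [ih _ (by omega), subst_var_gt s h, show a + 1 - 1 = a - 1 + 1 by omega]

lemma lift_appVars_le {c a m : ℕ} (t : Tm) (h : c ≤ a) :
    lift c (appVars t a m) = appVars (lift c t) (a + 1) m := by
  revert h
  induction m generalizing t a with
  | zero => intro _; rfl
  | succ m ih =>
      intro h
      rw [appVars_peel_inner, appVars_peel_inner]
      show app (lift c (appVars t (a + 1) m)) (lift c (var a)) = _
      rw [ih _ (by omega), lift_var_ge h]

lemma liftN_appVars {a m : ℕ} (j : ℕ) (t : Tm) :
    liftN j (appVars t a m) = appVars (liftN j t) (a + j) m := by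
  induction j generalizing t a with
  | zero => rfl
  | succ j ih =>
      rw [liftN_succ, lift_appVars_le t (Nat.zero_le a), ih, liftN_succ]
      congr 1
      omega

/-! ### Reduces and BetaEta machinery -/

lemma Reduces.refl (t : Tm) : Reduces t t := Relation.ReflTransGen.refl

lemma Reduces.trans {a b c : Tm} (h1 : Reduces a b) (h2 : Reduces b c) : Reduces a c :=
  Relation.ReflTransGen.trans h1 h2

lemma Step.reduces {a b : Tm} (h : Step a b) : Reduces a b :=
  Relation.ReflTransGen.single h

lemma Reduces.appL {a a' : Tm} (b : Tm) (h : Reduces a a') : Reduces (app a b) (app a' b) := by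
  induction h with
  | refl => exact Reduces.refl _
  | tail _ h2 ih => exact ih.tail (Step.appL _ h2)

lemma Reduces.appR (a : Tm) {b b' : Tm} (h : Reduces b b') : Reduces (app a b) (app a b') := by
  induction h with
  | refl => exact Reduces.refl _
  | tail _ h2 ih => exact ih.tail (Step.appR _ h2)

lemma Reduces.lamCongr {a a' : Tm} (h : Reduces a a') : Reduces (lam a) (lam a') := by
  induction h with
  | refl => exact Reduces.refl _
  | tail _ h2 ih => exact ih.tail (Step.lamCongr h2)

lemma Reduces.lamN (k : ℕ) {a a' : Tm} (h : Reduces a a') : Reduces (lamN k a) (lamN k a') := by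
  induction k with
  | zero => exact h
  | succ k ih => exact ih.lamCongr

lemma Reduces.appVarsCongr {t t' : Tm} (a k : ℕ) (h : Reduces t t') :
    Reduces (appVars t a k) (appVars t' a k) := by
  induction k generalizing a with
  | zero => exact h
  | succ k ih =>
      rw [appVars_peel_inner, appVars_peel_inner]
      exact (ih (a + 1)).appL _

lemma BetaEta.refl (t : Tm) : BetaEta t t := Relation.EqvGen.refl t

lemma BetaEta.symm {a b : Tm} (h : BetaEta a b) : BetaEta b a := Relation.EqvGen.symm _ _ h

lemma BetaEta.trans {a b c : Tm} (h1 : BetaEta a b) (h2 : BetaEta b c) : BetaEta a c :=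
  Relation.EqvGen.trans _ _ _ h1 h2

lemma Reduces.betaEta {a b : Tm} (h : Reduces a b) : BetaEta a b := by
  induction h with
  | refl => exact BetaEta.refl _
  | tail _ h2 ih => exact ih.trans (Relation.EqvGen.rel _ _ h2)

lemma BetaEta.lamCongr {a b : Tm} (h : BetaEta a b) : BetaEta (lam a) (lam b) := by
  induction h with
  | rel _ _ h => exact Relation.EqvGen.rel _ _ (Step.lamCongr h)
  | refl => exact BetaEta.refl _
  | symm _ _ _ ih => exact ih.symm
  | trans _ _ _ _ _ ih1 ih2 => exact ih1.trans ih2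

/-! ### eta expansion -/

lemma etaExpand (k : ℕ) (t : Tm) : BetaEta (lamN k (appVars (liftN k t) 0 k)) t := by
  induction k generalizing t with
  | zero => exact BetaEta.refl t
  | succ k ih =>
      have e1 : appVars (liftN (k + 1) t) 0 (k + 1)
          = appVars (liftN k (app (lift 0 t) (var 0))) 0 k := by
        rw [appVars_peel_outer, liftN_app, liftN_var, liftN_succ]
      rw [lamN_succ, e1]
      exact BetaEta.trans (BetaEta.lamCongr (ih (app (lift 0 t) (var 0))))
        (Relation.EqvGen.rel _ _ (Step.eta t))

/-! ### beta reduction of lamN applied to arguments -/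

lemma beta_lamN (k : ℕ) (b u : Tm) :
    Step (app (lamN (k + 1) b) u) (lamN k (subst k (liftN k u) b)) := by
  have h := Step.beta (lamN k b) u
  rwa [subst_lamN, Nat.zero_add] at h

/-- Effect of applying `lamN n b` to the variable spine `var n, …, var 1`. -/
def Theta : ℕ → Tm → Tm
  | 0, b => b
  | n + 1, b => Theta n (subst n (var (2 * n + 1)) b)

lemma spine_red (n : ℕ) (b : Tm) : Reduces (appVars (lamN n b) 1 n) (Theta n b) := by
  induction n generalizing b with
  | zero => exact Reduces.refl _
  | succ n ih =>
      rw [appVars_peel_outer]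
      refine Reduces.trans (Reduces.appVarsCongr 1 n (Step.reduces ?_)) (ih _)
      have h := beta_lamN n b (var (1 + n))
      rwa [liftN_var, show 1 + n + n = 2 * n + 1 by omega] at h

lemma Theta_app (n : ℕ) (a b : Tm) : Theta n (app a b) = app (Theta n a) (Theta n b) := by
  induction n generalizing a b with
  | zero => rfl
  | succ n ih =>
      show Theta n (subst n (var (2 * n + 1)) (app a b))
          = app (Theta n (subst n (var (2 * n + 1)) a)) (Theta n (subst n (var (2 * n + 1)) b))
      exact ih _ _

lemma Theta_var_ge (n d : ℕ) : Theta n (var (n + n + d)) = var (n + d) := by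
  induction n generalizing d with
  | zero => rfl
  | succ n ih =>
      show Theta n (subst n (var (2 * n + 1)) (var (n + 1 + (n + 1) + d))) = _
      rw [subst_var_gt _ (by omega), show n + 1 + (n + 1) + d - 1 = n + n + (d + 1) by omega,
        ih (d + 1)]
      congr 1; omega

lemma Theta_var_lt {i n : ℕ} (h : i < n) : Theta n (var i) = var (i + 1) := by
  induction n with
  | zero => omega
  | succ n ih =>
      show Theta n (subst n (var (2 * n + 1)) (var i)) = _
      rcases Nat.lt_or_ge i n with h' | h'
      · rw [subst_var_lt _ h', ih h']
      · have hi : i = n := by omega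
        subst hi
        rw [subst_var_self, show 2 * i + 1 = i + i + 1 by omega, Theta_var_ge]

lemma Theta_appVars {n a k : ℕ} (t : Tm) (h : a + k ≤ n) :
    Theta n (appVars t a k) = appVars (Theta n t) (a + 1) k := by
  revert h
  induction k generalizing t a with
  | zero => intro _; rfl
  | succ k ih =>
      intro h
      rw [appVars_peel_inner, appVars_peel_inner, Theta_app, ih _ (by omega),
        Theta_var_lt (show a < n by omega)]

lemma Theta_closed {b : Tm} (n : ℕ) (h : ClosedUnder 0 b) : Theta n b = b := by
  induction n with
  | zero => rfl
  | succ n ih =>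
      show Theta n (subst n (var (2 * n + 1)) b) = b
      rw [subst_closed _ h (Nat.zero_le n), ih]


/-! ### The main computation -/

lemma appVars_peel_outer0 (t : Tm) (k : ℕ) :
    appVars t 0 (k + 1) = appVars (app t (var k)) 0 k := by
  rw [appVars_peel_outer, Nat.zero_add]

lemma appVars_peel_inner0 (t : Tm) (k : ℕ) :
    appVars t 0 (k + 1) = app (appVars t 1 k) (var 0) := appVars_peel_inner t 0 k

/-- B applied to two closed terms and anything. -/
lemma B_red (x y z : Tm) (hx : ClosedUnder 0 x) (hy : ClosedUnder 0 y) :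
    Reduces (app (app (app B x) y) z) (app x (app y z)) := by
  have s1 : Step (app B x) (lamN 2 (app x (app (var 1) (var 0)))) := by
    have h := beta_lamN 2 (app (var 2) (app (var 1) (var 0))) x
    rw [liftN_closed 2 hx, show subst 2 x (app (var 2) (app (var 1) (var 0)))
        = app (subst 2 x (var 2)) (app (subst 2 x (var 1)) (subst 2 x (var 0))) from rfl,
      subst_var_self, subst_var_lt _ (by omega), subst_var_lt _ (by omega)] at h
    exact h
  have s2 : Step (app (lamN 2 (app x (app (var 1) (var 0)))) y)
      (lamN 1 (app x (app y (var 0)))) := by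
    have h := beta_lamN 1 (app x (app (var 1) (var 0))) y
    rw [liftN_closed 1 hy, show subst 1 y (app x (app (var 1) (var 0)))
        = app (subst 1 y x) (app (subst 1 y (var 1)) (subst 1 y (var 0))) from rfl,
      subst_closed _ hx (by omega), subst_var_self, subst_var_lt _ (by omega)] at h
    exact h
  have s3 : Step (app (lamN 1 (app x (app y (var 0)))) z) (app x (app y z)) := by
    have h := Step.beta (app x (app y (var 0))) z
    rw [show subst 0 z (app x (app y (var 0)))
        = app (subst 0 z x) (app (subst 0 z y) (subst 0 z (var 0))) from rfl,
      subst_closed _ hx (by omega), subst_closed _ hy (by omega), subst_var_self] at h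
    exact h
  exact (Reduces.appL z (Reduces.appL y s1.reduces)).trans
    ((Reduces.appL z s2.reduces).trans s3.reduces)

/-- Applying `Sn n` to a first argument. -/
lemma Sn_app (n : ℕ) (A : Tm) :
    Step (app (Sn n) A)
      (lamN (n + 1) (app (appVars (liftN (n + 1) A) 0 n) (appVars (var n) 0 n))) := by
  have h := beta_lamN (n + 1) (app (appVars (var (n + 1)) 0 n) (appVars (var n) 0 n)) A
  rw [show subst (n + 1) (liftN (n + 1) A)
        (app (appVars (var (n + 1)) 0 n) (appVars (var n) 0 n))
      = app (subst (n + 1) (liftN (n + 1) A) (appVars (var (n + 1)) 0 n))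
          (subst (n + 1) (liftN (n + 1) A) (appVars (var n) 0 n)) from rfl,
    subst_appVars_le _ _ (by omega), subst_appVars_le _ _ (by omega),
    subst_var_self, subst_var_lt _ (by omega)] at h
  exact h

/-- The final S-redex computation. -/
lemma S_red (n : ℕ) :
    Reduces
      (app (app (app S (appVars (var (n + 2)) 1 n)) (appVars (var (n + 1)) 1 n)) (var 0))
      (app (appVars (var (n + 2)) 0 (n + 1)) (appVars (var (n + 1)) 0 (n + 1))) := by
  have s1 : Step (app S (appVars (var (n + 2)) 1 n))
      (lamN 2 (app (app (appVars (var (n + 4)) 3 n) (var 0)) (app (var 1) (var 0)))) := by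
    have h := beta_lamN 2 (app (app (var 2) (var 0)) (app (var 1) (var 0)))
      (appVars (var (n + 2)) 1 n)
    rw [liftN_appVars, liftN_var, show n + 2 + 2 = n + 4 by omega,
      show (1 : ℕ) + 2 = 3 by omega] at h
    rw [show subst 2 (appVars (var (n + 4)) 3 n) (app (app (var 2) (var 0)) (app (var 1) (var 0)))
        = app (app (subst 2 (appVars (var (n + 4)) 3 n) (var 2))
                   (subst 2 (appVars (var (n + 4)) 3 n) (var 0)))
              (app (subst 2 (appVars (var (n + 4)) 3 n) (var 1))
                   (subst 2 (appVars (var (n + 4)) 3 n) (var 0))) from rfl,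
      subst_var_self, subst_var_lt _ (by omega), subst_var_lt _ (by omega)] at h
    exact h
  have s2 : Step (app (lamN 2 (app (app (appVars (var (n + 4)) 3 n) (var 0))
        (app (var 1) (var 0)))) (appVars (var (n + 1)) 1 n))
      (lamN 1 (app (app (appVars (var (n + 3)) 2 n) (var 0))
        (app (appVars (var (n + 2)) 2 n) (var 0)))) := by
    have h := beta_lamN 1 (app (app (appVars (var (n + 4)) 3 n) (var 0)) (app (var 1) (var 0)))
      (appVars (var (n + 1)) 1 n)
    rw [liftN_appVars, liftN_var, show n + 1 + 1 = n + 2 by omega,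
      show (1 : ℕ) + 1 = 2 by omega] at h
    rw [show subst 1 (appVars (var (n + 2)) 2 n)
          (app (app (appVars (var (n + 4)) 3 n) (var 0)) (app (var 1) (var 0)))
        = app (app (subst 1 (appVars (var (n + 2)) 2 n) (appVars (var (n + 4)) 3 n))
                   (subst 1 (appVars (var (n + 2)) 2 n) (var 0)))
              (app (subst 1 (appVars (var (n + 2)) 2 n) (var 1))
                   (subst 1 (appVars (var (n + 2)) 2 n) (var 0))) from rfl,
      subst_appVars_lt _ _ (by omega), subst_var_gt _ (by omega), subst_var_self,
      subst_var_lt _ (by omega)] at h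
    rw [show n + 4 - 1 = n + 3 by omega, show (3 : ℕ) - 1 = 2 by omega] at h
    exact h
  have s3 : Step (app (lamN 1 (app (app (appVars (var (n + 3)) 2 n) (var 0))
        (app (appVars (var (n + 2)) 2 n) (var 0)))) (var 0))
      (app (appVars (var (n + 2)) 0 (n + 1)) (appVars (var (n + 1)) 0 (n + 1))) := by
    have h := Step.beta (app (app (appVars (var (n + 3)) 2 n) (var 0))
        (app (appVars (var (n + 2)) 2 n) (var 0))) (var 0)
    rw [show subst 0 (var 0) (app (app (appVars (var (n + 3)) 2 n) (var 0))
          (app (appVars (var (n + 2)) 2 n) (var 0)))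
        = app (app (subst 0 (var 0) (appVars (var (n + 3)) 2 n)) (subst 0 (var 0) (var 0)))
              (app (subst 0 (var 0) (appVars (var (n + 2)) 2 n))
                   (subst 0 (var 0) (var 0))) from rfl,
      subst_appVars_lt _ _ (by omega), subst_appVars_lt _ _ (by omega),
      subst_var_self, subst_var_gt _ (by omega), subst_var_gt _ (by omega)] at h
    rw [show n + 3 - 1 = n + 2 by omega, show n + 2 - 1 = n + 1 by omega,
      show (2 : ℕ) - 1 = 1 by omega, ← appVars_peel_inner0, ← appVars_peel_inner0] at h
    exact h
  exact (Reduces.appL (var 0) (Reduces.appL (appVars (var (n + 1)) 1 n) s1.reduces)).trans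
    ((Reduces.appL (var 0) s2.reduces).trans s3.reduces)

lemma main_red (n : ℕ) :
    Reduces (appVars (app (app B (Sn n)) (app (Sn n) (app (Kn n) S))) 0 (n + 3))
      (app (appVars (var (n + 2)) 0 (n + 1)) (appVars (var (n + 1)) 0 (n + 1))) := by
  have Cs : ClosedUnder 0 (Sn n) := closed_Sn n
  have Ck0 : ClosedUnder 0 (app (Kn n) S) := ⟨closed_Kn n, closed_S⟩
  have Cr0 : ClosedUnder 0 (app (Sn n) (app (Kn n) S)) := ⟨Cs, Ck0⟩
  -- spine decomposition
  rw [show n + 3 = (n + 2) + 1 by omega, appVars_peel_outer0,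
    show n + 2 = (n + 1) + 1 by omega, appVars_peel_outer0, appVars_peel_inner0]
  -- reduce the head T₂ := T (var (n+2)) (var (n+1)) to H3 = lamN n body3
  have hA : Reduces (app (app (app B (Sn n)) (app (Sn n) (app (Kn n) S))) (var (n + 1 + 1)))
      (app (Sn n) (app (app (Sn n) (app (Kn n) S)) (var (n + 1 + 1)))) :=
    B_red _ _ _ Cs Cr0
  have hB : Step (app (Sn n) (app (app (Sn n) (app (Kn n) S)) (var (n + 1 + 1))))
      (lamN (n + 1) (app (appVars (app (app (Sn n) (app (Kn n) S)) (var (n + n + 3))) 0 n)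
        (appVars (var n) 0 n))) := by
    have h := Sn_app n (app (app (Sn n) (app (Kn n) S)) (var (n + 1 + 1)))
    rw [liftN_app, liftN_closed _ Cr0, liftN_var, show n + 1 + 1 + (n + 1) = n + n + 3 by omega]
      at h
    exact h
  have hC : Step (app (lamN (n + 1)
        (app (appVars (app (app (Sn n) (app (Kn n) S)) (var (n + n + 3))) 0 n)
          (appVars (var n) 0 n))) (var (n + 1)))
      (lamN n (app (appVars (app (app (Sn n) (app (Kn n) S)) (var (n + n + 2))) 0 n)
        (appVars (var (n + n + 1)) 0 n))) := by
    have h := beta_lamN n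
      (app (appVars (app (app (Sn n) (app (Kn n) S)) (var (n + n + 3))) 0 n)
        (appVars (var n) 0 n)) (var (n + 1))
    rw [liftN_var, show n + 1 + n = n + n + 1 by omega] at h
    rw [show subst n (var (n + n + 1))
          (app (appVars (app (app (Sn n) (app (Kn n) S)) (var (n + n + 3))) 0 n)
            (appVars (var n) 0 n))
        = app (subst n (var (n + n + 1))
              (appVars (app (app (Sn n) (app (Kn n) S)) (var (n + n + 3))) 0 n))
            (subst n (var (n + n + 1)) (appVars (var n) 0 n)) from rfl,
      subst_appVars_le _ _ (by omega), subst_appVars_le _ _ (by omega),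
      show subst n (var (n + n + 1)) (app (app (Sn n) (app (Kn n) S)) (var (n + n + 3)))
        = app (subst n (var (n + n + 1)) (app (Sn n) (app (Kn n) S)))
            (subst n (var (n + n + 1)) (var (n + n + 3))) from rfl,
      subst_closed _ Cr0 (by omega), subst_var_gt _ (by omega), subst_var_self,
      show n + n + 3 - 1 = n + n + 2 by omega] at h
    exact h
  -- reduce the head of the spine
  have h1 : Reduces
      (appVars (app (app (app (app B (Sn n)) (app (Sn n) (app (Kn n) S))) (var (n + 1 + 1)))
        (var (n + 1))) 1 n)
      (app (appVars (app (app (Sn n) (app (Kn n) S)) (var (n + 2))) 1 n)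
        (appVars (var (n + 1)) 1 n)) := by
    refine (Reduces.appVarsCongr 1 n
      (((Reduces.appL (var (n + 1)) hA).trans
        (Reduces.appL (var (n + 1)) hB.reduces)).trans hC.reduces)).trans ?_
    refine (spine_red n _).trans ?_
    rw [Theta_app, Theta_appVars _ (by omega), Theta_appVars _ (by omega), Theta_app,
      Theta_closed n Cr0, Theta_var_ge n 2, Theta_var_ge n 1]
    exact Reduces.refl _
  -- reduce  r0 (var (n+2))  to  S (p x⃗)  under the spine
  have hr0 : Reduces (app (app (Sn n) (app (Kn n) S)) (var (n + 2)))
      (lamN n (app (appVars (app (Kn n) S) 0 n) (appVars (var (n + n + 2)) 0 n))) := by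
    have sa := Sn_app n (app (Kn n) S)
    rw [liftN_closed _ Ck0] at sa
    have sb : Step (app (lamN (n + 1) (app (appVars (app (Kn n) S) 0 n) (appVars (var n) 0 n)))
        (var (n + 2)))
        (lamN n (app (appVars (app (Kn n) S) 0 n) (appVars (var (n + n + 2)) 0 n))) := by
      have h := beta_lamN n (app (appVars (app (Kn n) S) 0 n) (appVars (var n) 0 n))
        (var (n + 2))
      rw [liftN_var, show n + 2 + n = n + n + 2 by omega] at h
      rw [show subst n (var (n + n + 2)) (app (appVars (app (Kn n) S) 0 n) (appVars (var n) 0 n))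
          = app (subst n (var (n + n + 2)) (appVars (app (Kn n) S) 0 n))
              (subst n (var (n + n + 2)) (appVars (var n) 0 n)) from rfl,
        subst_appVars_le _ _ (by omega), subst_appVars_le _ _ (by omega),
        subst_closed _ Ck0 (by omega), subst_var_self] at h
      exact h
    exact (Reduces.appL (var (n + 2)) sa.reduces).trans sb.reduces
  have h2 : Reduces (appVars (app (app (Sn n) (app (Kn n) S)) (var (n + 2))) 1 n)
      (app (appVars (app (Kn n) S) 1 n) (appVars (var (n + 2)) 1 n)) := by
    refine ((Reduces.appVarsCongr 1 n hr0).trans ((spine_red n _).trans ?_))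
    rw [Theta_app, Theta_appVars _ (by omega), Theta_appVars _ (by omega),
      Theta_closed n Ck0, Theta_var_ge n 2]
    exact Reduces.refl _
  have h3 : Reduces (appVars (app (Kn n) S) 1 n) S := by
    have sk : Step (app (Kn n) S) (lamN n S) := by
      have h := beta_lamN n (var n) S
      rw [liftN_closed _ closed_S, subst_var_self] at h
      exact h
    refine (Reduces.appVarsCongr 1 n sk.reduces).trans ((spine_red n S).trans ?_)
    rw [Theta_closed n closed_S]
    exact Reduces.refl _
  -- assemble
  refine (Reduces.appL (var 0) h1).trans ?_
  refine (Reduces.appL (var 0) (Reduces.appL (appVars (var (n + 1)) 1 n)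
    (h2.trans (Reduces.appL (appVars (var (n + 2)) 1 n) h3)))).trans ?_
  exact S_red n


/-- S_{n+1} =βη (B S_n (S_n (K_n S))), and S_0 =βη I. -/
theorem Sn_recurrence (n : ℕ) :
    BetaEta (Sn (n + 1)) (app (app B (Sn n)) (app (Sn n) (app (Kn n) S))) ∧
    BetaEta (Sn 0) I := by
  constructor
  · have CT : ClosedUnder 0 (app (app B (Sn n)) (app (Sn n) (app (Kn n) S))) :=
      ⟨⟨closed_B, closed_Sn n⟩, closed_Sn n, closed_Kn n, closed_S⟩
    have hEta := etaExpand (n + 3) (app (app B (Sn n)) (app (Sn n) (app (Kn n) S)))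
    rw [liftN_closed _ CT] at hEta
    have hRed : Reduces
        (lamN (n + 3) (appVars (app (app B (Sn n)) (app (Sn n) (app (Kn n) S))) 0 (n + 3)))
        (Sn (n + 1)) := by
      have e : Sn (n + 1) = lamN (n + 3)
          (app (appVars (var (n + 2)) 0 (n + 1)) (appVars (var (n + 1)) 0 (n + 1))) := by
        show lamN (n + 1 + 2) _ = _
        rw [show n + 1 + 2 = n + 3 by omega, show n + 1 + 1 = n + 2 by omega]
      rw [e]
      exact Reduces.lamN _ (main_red n)
    exact (hRed.betaEta.symm).trans hEta
  · have hstep : Step (lam (app (var 1) (var 0))) (var 0) := by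
      have h := Step.eta (var 0)
      rw [lift_var_ge (Nat.le_refl 0)] at h
      exact h
    exact Reduces.betaEta (Step.reduces (Step.lamCongr hstep))


end Tm
end LC
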